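/- The weak-subobject doctrine of Rec agrees with that of partitioned assemblies along the embedding: for every A ⊆ ℕ, the map sending the class of a morphism f : B → A of Rec to the class of Sgl_p(f) : Sgl_p(B) → Sgl_p(A) is an order-isomorphism between wSub_Rec(A) and wSub_pAsm(Sgl_p(A)), and these isomorphisms are natural in A (they commute with reindexing by pullback along morphisms of Rec). -/

import Mathlib

open CategoryTheory

namespace RecPaper

/-- Kleene application `{e}(n)`: apply the partial recursive function with Gödel code `e`
to the input `n`. -/
def kap (e n : ℕ) : Part ℕ :=
  Nat.Partrec.Code.eval (Denumerable.ofNat Nat.Partrec.Code e) n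

/-- The type of objects of the category `Rec`: subsets of `ℕ`. -/
def RecCat : Type := Set ℕ

/-- The underlying subset of `ℕ` of an object of `Rec`. -/
def RecCat.carrier (A : RecCat) : Set ℕ := A

/-- View a subset of `ℕ` as an object of `Rec`. -/
def RecCat.ofSet (A : Set ℕ) : RecCat := A

instance : CoeSort RecCat Type := ⟨fun A => {n : ℕ // n ∈ A.carrier}⟩

/-- A function between subsets of `ℕ` is *tracked* if there is a partial recursive
function, defined on the whole domain, whose restriction to the domain is the given
function. -/
def Tracked {A B : RecCat} (f : A → B) : Prop :=
  ∃ g : ℕ →. ℕ, Nat.Partrec g ∧ ∀ a : A, g a.val = Part.some (f a).val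

/-- The category `Rec` of subsets of `ℕ` and restrictions of partial recursive functions. -/
instance : Category RecCat where
  Hom A B := {f : A → B // Tracked f}
  id A := ⟨fun a => a, (fun n => n : ℕ → ℕ), Nat.Partrec.of_primrec Nat.Primrec.id,
    fun _ => rfl⟩
  comp {A B C} f g := ⟨fun a => g.1 (f.1 a), by
    obtain ⟨u, pu, hu⟩ := f.2
    obtain ⟨v, pv, hv⟩ := g.2
    refine ⟨fun n => u n >>= v, pv.comp pu, fun a => ?_⟩
    exact (congrArg (fun p => p >>= v) (hu a)).trans ((Part.bind_some _ v).trans (hv (f.1 a)))⟩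
  id_comp _ := rfl
  comp_id _ := rfl
  assoc _ _ _ := rfl

/-- The underlying function of a morphism of `Rec`. -/
def hfun {A B : RecCat} (f : A ⟶ B) : A → B := f.1

/-- The value of a morphism of `Rec` on an element, as a natural number. -/
def happ {A B : RecCat} (f : A ⟶ B) (a : A) : ℕ := (hfun f a).val


/-- Objects of the category `Asm` of assemblies: a set together with nonempty sets of
realizers. -/
structure AsmObj : Type 1 where
  carrier : Type
  real : carrier → Set ℕ
  hne : ∀ a, (real a).Nonempty

/-- Tracking for functions between assemblies: some partial recursive function sends
realizers of `a` to realizers of `f a`. -/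
def AsmTracked {X Y : AsmObj} (f : X.carrier → Y.carrier) : Prop :=
  ∃ g : ℕ →. ℕ, Nat.Partrec g ∧
    ∀ a : X.carrier, ∀ n ∈ X.real a, ∃ v ∈ Y.real (f a), g n = Part.some v

/-- The category `Asm` of assemblies. -/
instance : Category AsmObj where
  Hom X Y := {f : X.carrier → Y.carrier // AsmTracked f}
  id X := ⟨fun a => a, (fun n => n : ℕ → ℕ), Nat.Partrec.of_primrec Nat.Primrec.id,
    fun _ n hn => ⟨n, hn, rfl⟩⟩
  comp {X Y Z} f g := ⟨fun a => g.1 (f.1 a), by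
    obtain ⟨u, pu, hu⟩ := f.2
    obtain ⟨v, pv, hv⟩ := g.2
    refine ⟨fun n => u n >>= v, pv.comp pu, fun a n hn => ?_⟩
    obtain ⟨m, hm, hum⟩ := hu a n hn
    obtain ⟨w, hw, hvw⟩ := hv (f.1 a) m hm
    exact ⟨w, hw, (congrArg (fun p => p >>= v) hum).trans ((Part.bind_some _ v).trans hvw)⟩⟩
  id_comp _ := rfl
  comp_id _ := rfl
  assoc _ _ _ := rfl

/-- An assembly is partitioned if every set of realizers is a singleton. -/
def AsmObj.IsPartitioned (X : AsmObj) : Prop := ∀ a, ∃ n, X.real a = {n}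

/-- An assembly is modest if distinct elements have disjoint sets of realizers. -/
def AsmObj.IsModest (X : AsmObj) : Prop :=
  ∀ a b, (X.real a ∩ X.real b).Nonempty → a = b

/-- The assembly `(A, a ↦ {a})` attached to an object of `Rec`. -/
def SglObj (A : RecCat) : AsmObj :=
  ⟨{n : ℕ // n ∈ A.carrier}, fun a => {a.val}, fun a => ⟨a.val, rfl⟩⟩

/-- The functor `Sgl : Rec ⥤ Asm` sending `A` to `(A, a ↦ {a})` and each morphism to
itself. -/
def Sgl : RecCat ⥤ AsmObj where
  obj A := SglObj A
  map {A B} f := ⟨fun a => hfun f a, by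
    obtain ⟨g, pg, hg⟩ := f.2
    refine ⟨g, pg, fun a n hn => ⟨(hfun f a).val, rfl, ?_⟩⟩
    have hna : n = a.val := hn
    rw [hna]
    exact hg a⟩
  map_id _ := rfl
  map_comp _ _ := rfl


/-- The category `pAsm` of partitioned assemblies, as a full subcategory of `Asm`. -/
abbrev PAsm : Type 1 := ObjectProperty.FullSubcategory AsmObj.IsPartitioned

/-- The functor `Sgl_p : Rec ⥤ pAsm` sending `A` to `(A, a ↦ {a})` and each morphism to
itself. -/
def Sglp : RecCat ⥤ PAsm where
  obj A := ⟨SglObj A, fun a => ⟨a.val, rfl⟩⟩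
  map f := ObjectProperty.homMk (Sgl.map f)
  map_id _ := rfl
  map_comp _ _ := rfl

/-!
`Sgl_p` is fully faithful, which makes `[f] ↦ [Sgl_p f]` an order embedding. A partitioned
assembly `X` with realizer map `r` maps onto `Sgl_p (r[X])`, and choosing a preimage of each
realizer gives a map back. As `Sgl_p A` is modest, a morphism `X ⟶ Sgl_p A` depends only on
the realizer of its argument, so it factors through `X ⟶ Sgl_p (r[X])` and is mutually
factorizable with the image under `Sgl_p` of a morphism of `Rec`. Applied to a pullback in
`pAsm`, this compares it with the corresponding pullback in `Rec`.
-/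

theorem _root_.CategoryTheory.Functor.exists_comp_map_eq_map_iff {C D : Type*} [Category C]
    [Category D] (F : C ⥤ D) [F.Full] [F.Faithful] {A B C' : C} (f : B ⟶ A) (g : C' ⟶ A) :
    (∃ h : B ⟶ C', h ≫ g = f) ↔ ∃ k : F.obj B ⟶ F.obj C', k ≫ F.map g = F.map f := by
  constructor
  · rintro ⟨h, rfl⟩
    exact ⟨F.map h, (F.map_comp h g).symm⟩
  · rintro ⟨k, hk⟩
    refine ⟨F.preimage k, F.map_injective ?_⟩
    rw [F.map_comp, F.map_preimage, hk]

theorem isModest_sglObj (A : RecCat) : (SglObj A).IsModest := by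
  rintro a b ⟨n, ha, hb⟩
  exact Subtype.ext (ha.symm.trans hb)

theorem AsmObj.hom_apply_eq_of_real_inter {X Y : AsmObj} (hY : Y.IsModest) (u : X ⟶ Y)
    {x y : X.carrier} (hxy : (X.real x ∩ X.real y).Nonempty) : u.1 x = u.1 y := by
  obtain ⟨g, -, hg⟩ := u.2
  obtain ⟨n, hx, hy⟩ := hxy
  obtain ⟨v, hv, hgv⟩ := hg x n hx
  obtain ⟨w, hw, hgw⟩ := hg y n hy
  obtain rfl : v = w := Part.some_injective (hgv.symm.trans hgw)
  exact hY _ _ ⟨v, hv, hw⟩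

instance : Sglp.Faithful where
  map_injective e := Subtype.ext (congrArg (fun k => k.hom.1) e)

instance : Sglp.Full where
  map_surjective k := by
    obtain ⟨g, pg, hg⟩ := k.hom.2
    refine ⟨⟨k.hom.1, g, pg, fun a => ?_⟩, ObjectProperty.hom_ext _ (Subtype.ext rfl)⟩
    obtain ⟨v, rfl, hgv⟩ := hg a a.val rfl
    exact hgv

namespace PAsm

noncomputable def realizer (X : PAsm) (x : X.obj.carrier) : ℕ := (X.property x).choose

theorem real_eq_singleton_realizer (X : PAsm) (x : X.obj.carrier) :
    X.obj.real x = {X.realizer x} :=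
  (X.property x).choose_spec

def realizers (X : PAsm) : RecCat := Set.range X.realizer

noncomputable def toRealizers (X : PAsm) : X ⟶ Sglp.obj X.realizers :=
  ObjectProperty.homMk ⟨fun x => ⟨X.realizer x, x, rfl⟩, Part.some, Nat.Partrec.some,
    fun x n hn => ⟨n, by rwa [real_eq_singleton_realizer] at hn, rfl⟩⟩

noncomputable def ofRealizers (X : PAsm) : Sglp.obj X.realizers ⟶ X :=
  ObjectProperty.homMk ⟨fun b => b.2.choose, Part.some, Nat.Partrec.some,
    fun b n hn => ⟨n, by rw [real_eq_singleton_realizer, b.2.choose_spec]; exact hn, rfl⟩⟩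

theorem toRealizers_ofRealizers_comp (X : PAsm) {A : RecCat} (u : X ⟶ Sglp.obj A) :
    X.toRealizers ≫ X.ofRealizers ≫ u = u := by
  refine ObjectProperty.hom_ext _ (Subtype.ext (funext fun x => ?_))
  have hx : X.realizer (X.ofRealizers.hom.1 (X.toRealizers.hom.1 x)) = X.realizer x :=
    (X.toRealizers.hom.1 x).2.choose_spec
  refine AsmObj.hom_apply_eq_of_real_inter (isModest_sglObj A) u.hom ⟨X.realizer x, ?_, ?_⟩
  · rw [real_eq_singleton_realizer, hx]
    rfl
  · rw [real_eq_singleton_realizer]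
    rfl

theorem exists_ofRealizers_comp_eq_map (X : PAsm) {A : RecCat} (u : X ⟶ Sglp.obj A) :
    ∃ f : X.realizers ⟶ A, X.ofRealizers ≫ u = Sglp.map f ∧ X.toRealizers ≫ Sglp.map f = u :=
  ⟨Sglp.preimage (X.ofRealizers ≫ u), (Sglp.map_preimage _).symm,
    by rw [Sglp.map_preimage, X.toRealizers_ofRealizers_comp]⟩

end PAsm

theorem exists_comparison_of_isPullback {A A' B W : RecCat} {h : A' ⟶ A} {f : B ⟶ A}
    {w : W ⟶ B} {f' : W ⟶ A'} (hW : IsPullback w f' f h) {V : PAsm} {v₁ : V ⟶ Sglp.obj B}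
    {v₂ : V ⟶ Sglp.obj A'} (hV : IsPullback v₁ v₂ (Sglp.map f) (Sglp.map h)) :
    ∃ (k₁ : Sglp.obj W ⟶ V) (k₂ : V ⟶ Sglp.obj W),
      k₁ ≫ v₂ = Sglp.map f' ∧ k₂ ≫ Sglp.map f' = v₂ := by
  obtain ⟨b, hb, -⟩ := V.exists_ofRealizers_comp_eq_map v₁
  obtain ⟨c, hc, hvc⟩ := V.exists_ofRealizers_comp_eq_map v₂
  have hbc : b ≫ f = c ≫ h := Sglp.map_injective <| by
    rw [Sglp.map_comp, Sglp.map_comp, ← hb, ← hc, Category.assoc, Category.assoc, hV.w]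
  refine ⟨hV.lift _ _ (hW.toCommSq.map Sglp).w, V.toRealizers ≫ Sglp.map (hW.lift b c hbc),
    hV.lift_snd _ _ _, ?_⟩
  rw [Category.assoc, ← Sglp.map_comp, hW.lift_snd, hvc]

/-- The weak-subobject doctrine of `Rec` agrees with that of partitioned assemblies along
the embedding `Sgl_p`: the assignment `[f] ↦ [Sgl_p f]` preserves and reflects the order
of weak subobjects, is surjective up to mutual factorization, and commutes with
reindexing by pullback along morphisms of `Rec`. -/
theorem rec_wsub_eq_pasm_wsub :
    (∀ (A B C : RecCat) (f : B ⟶ A) (g : C ⟶ A),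
      (∃ h : B ⟶ C, h ≫ g = f) ↔
      (∃ k : Sglp.obj B ⟶ Sglp.obj C, k ≫ Sglp.map g = Sglp.map f)) ∧
    (∀ (A : RecCat) (X : PAsm) (u : X ⟶ Sglp.obj A),
      ∃ (B : RecCat) (f : B ⟶ A) (k₁ : Sglp.obj B ⟶ X) (k₂ : X ⟶ Sglp.obj B),
        k₁ ≫ u = Sglp.map f ∧ k₂ ≫ Sglp.map f = u) ∧
    (∀ (A A' : RecCat) (h : A' ⟶ A) (B : RecCat) (f : B ⟶ A)
       (W : RecCat) (w : W ⟶ B) (f' : W ⟶ A'),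
      IsPullback w f' f h →
      ∀ (V : PAsm) (v₁ : V ⟶ Sglp.obj B) (v₂ : V ⟶ Sglp.obj A'),
        IsPullback v₁ v₂ (Sglp.map f) (Sglp.map h) →
        ∃ (k₁ : Sglp.obj W ⟶ V) (k₂ : V ⟶ Sglp.obj W),
          k₁ ≫ v₂ = Sglp.map f' ∧ k₂ ≫ Sglp.map f' = v₂) := by
  refine ⟨fun A B C f g => Sglp.exists_comp_map_eq_map_iff f g, fun A X u => ?_,
    fun A A' h B f W w f' hW V v₁ v₂ hV => exists_comparison_of_isPullback hW hV⟩
  obtain ⟨f, hf₁, hf₂⟩ := X.exists_ofRealizers_comp_eq_map u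
  exact ⟨X.realizers, f, X.ofRealizers, X.toRealizers, hf₁, hf₂⟩

end RecPaper
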